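/- Consider the ODE system with dz_i/dt = −E_o z_i/(Lμ), dz_o/dt = −E_i z_o/(Lμ), and dv/dt = −(E_o k_1 P(Z_i=k_1) v)/(Lμ) − (E_i k_2 P(Z_o=k_2) v)/(Lμ), where P(Z_i=k_1) = z_i^{k_1}/(k_1! f_{k_1}(z_i)) and P(Z_o=k_2) = z_o^{k_2}/(k_2! f_{k_2}(z_o)). Then the quantity p_{k_1}(z_i)·p_{k_2}(z_o)/v is constant in t along any solution with L, μ, v, z_i, z_o > 0. -/

import Mathlib

open Real Filter Set

/-- `truncExpSum k z = Σ_{j≥k} z^j/j!`. -/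
noncomputable def truncExpSum (k : ℕ) (z : ℝ) : ℝ :=
  ∑' j : ℕ, if k ≤ j then z ^ j / (Nat.factorial j : ℝ) else 0

/-- `poisTail k z = P(Poi(z) ≥ k) = e^{-z} Σ_{j≥k} z^j/j!`. -/
noncomputable def poisTail (k : ℕ) (z : ℝ) : ℝ := Real.exp (-z) * truncExpSum k z

/-- Mean of Poisson(z) conditioned on being ≥ k: `ψ_k(z) = z f_{k-1}(z)/f_k(z)`. -/
noncomputable def truncMean (k : ℕ) (z : ℝ) : ℝ :=
  z * truncExpSum (k - 1) z / truncExpSum k z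

/-- Second moment of the truncated Poisson. -/
noncomputable def truncSecondMoment (k : ℕ) (z : ℝ) : ℝ :=
  (∑' j : ℕ, if k ≤ j then (j : ℝ) ^ 2 * z ^ j / (Nat.factorial j : ℝ) else 0)
    / truncExpSum k z

/-- Variance of the truncated Poisson. -/
noncomputable def truncVar (k : ℕ) (z : ℝ) : ℝ :=
  truncSecondMoment k z - (truncMean k z) ^ 2

/-- `φ_r(z) = z·P(Poi(z)=r−1)/P(Poi(z)≥r)` for `r ≥ 1`, with `φ_0 := 0`. -/
noncomputable def phiP (r : ℕ) (z : ℝ) : ℝ :=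
  if r = 0 then 0
  else z * (Real.exp (-z) * z ^ (r - 1) / (Nat.factorial (r - 1) : ℝ)) / poisTail r z

/-- `H(z_i,z_o) = (1 − φ_{k_1}(z_i))(1 − φ_{k_2}(z_o)) − φ_{k_1−1}(z_i)φ_{k_2−1}(z_o)`. -/
noncomputable def Hfun (k1 k2 : ℕ) (zi zo : ℝ) : ℝ :=
  (1 - phiP k1 zi) * (1 - phiP k2 zo) - phiP (k1 - 1) zi * phiP (k2 - 1) zo

/-- `Ψ(z_i,z_o) = max{ z_i/(p_{k_1}(z_i)p_{k_2−1}(z_o)), z_o/(p_{k_2}(z_o)p_{k_1−1}(z_i)) }`. -/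
noncomputable def Psi (k1 k2 : ℕ) (zi zo : ℝ) : ℝ :=
  max (zi / (poisTail k1 zi * poisTail (k2 - 1) zo))
      (zo / (poisTail k2 zo * poisTail (k1 - 1) zi))

/-!
Since `p_k(z) = 1 - e^{-z} Σ_{j<k} z^j/j!`, one gets `p_k'(z) = e^{-z} z^{k-1}/(k-1)!`, i.e.
`d/dz log p_k(z) = k P(Z = k)/z` for `Z ~ Poisson(z)` conditioned on `Z ≥ k`. Along the flow
`z_i' = -E_o z_i/(Lμ)`, so `d/dt log p_{k₁}(z_i) = -E_o k₁ P(Z_i = k₁)/(Lμ)`, and likewise for `z_o`.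
These two logarithmic derivatives add up to `d/dt log v`, so the derivative of
`p_{k₁}(z_i) p_{k₂}(z_o)/v` vanishes identically.
-/

open scoped Nat

lemma summable_truncExpSum_term (k : ℕ) (z : ℝ) :
    Summable (fun j : ℕ => if k ≤ j then z ^ j / (j ! : ℝ) else 0) := by
  refine ((Real.summable_pow_div_factorial z).indicator {j : ℕ | k ≤ j}).congr fun j => ?_
  simp [Set.indicator_apply]

lemma truncExpSum_pos (k : ℕ) {z : ℝ} (hz : 0 < z) : 0 < truncExpSum k z :=
  (summable_truncExpSum_term k z).tsum_pos (fun j => by positivity) k (by rw [if_pos le_rfl]; positivity)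

lemma truncExpSum_eq_exp_sub_sum (k : ℕ) (z : ℝ) :
    truncExpSum k z = exp z - ∑ j ∈ Finset.range k, z ^ j / (j ! : ℝ) := by
  have hhead : HasSum (fun j => if j < k then z ^ j / (j ! : ℝ) else 0)
      (∑ j ∈ Finset.range k, z ^ j / (j ! : ℝ)) := by
    rw [← Finset.sum_ite_of_true (fun j hj => Finset.mem_range.mp hj) _ fun _ => (0 : ℝ)]
    exact hasSum_sum_of_ne_finset_zero fun j hj => by simp_all
  have hsplit : (fun j : ℕ => z ^ j / (j ! : ℝ)) = fun j =>
      (if k ≤ j then z ^ j / (j ! : ℝ) else 0) + (if j < k then z ^ j / (j ! : ℝ) else 0) := by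
    funext j
    split_ifs <;> first | omega | simp
  have hexp := NormedSpace.expSeries_div_hasSum_exp z
  rw [hsplit, ← Real.exp_eq_exp_ℝ] at hexp
  rw [eq_sub_iff_add_eq]
  exact ((summable_truncExpSum_term k z).hasSum.add hhead).unique hexp

lemma hasDerivAt_sum_range_succ_pow_div_factorial (n : ℕ) (z : ℝ) :
    HasDerivAt (fun z => ∑ j ∈ Finset.range (n + 1), z ^ j / (j ! : ℝ))
      (∑ j ∈ Finset.range n, z ^ j / (j ! : ℝ)) z := by
  simp only [Finset.sum_range_succ', pow_zero, Nat.factorial_zero, Nat.cast_one, div_one]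
  refine (HasDerivAt.fun_sum fun j _ => (hasDerivAt_pow (j + 1) z).div_const _).add_const _
    |>.congr_deriv (Finset.sum_congr rfl fun j _ => ?_)
  rw [Nat.factorial_succ]
  push_cast
  field_simp

lemma poisTail_eq_one_sub (k : ℕ) (z : ℝ) :
    poisTail k z = 1 - exp (-z) * ∑ j ∈ Finset.range k, z ^ j / (j ! : ℝ) := by
  rw [poisTail, truncExpSum_eq_exp_sub_sum, mul_sub, ← exp_add, neg_add_cancel, exp_zero]

lemma hasDerivAt_poisTail_succ (n : ℕ) (z : ℝ) :
    HasDerivAt (poisTail (n + 1)) (exp (-z) * (z ^ n / (n ! : ℝ))) z := by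
  have hexp : HasDerivAt (fun z => exp (-z)) (-exp (-z)) z := by
    simpa using (hasDerivAt_neg z).exp
  have h := (hexp.mul (hasDerivAt_sum_range_succ_pow_div_factorial n z)).const_sub 1
  rw [funext (poisTail_eq_one_sub (n + 1))]
  refine h.congr_deriv ?_
  rw [Finset.sum_range_succ]
  ring

lemma hasDerivAt_poisTail {k : ℕ} {z : ℝ} (hz : 0 < z) :
    HasDerivAt (poisTail k)
      (k * (z ^ k / ((k ! : ℝ) * truncExpSum k z)) * poisTail k z / z) z := by
  cases k with
  | zero =>
    simpa [funext (poisTail_eq_one_sub 0)] using hasDerivAt_const z (1 : ℝ)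
  | succ n =>
    refine (hasDerivAt_poisTail_succ n z).congr_deriv ?_
    have := (truncExpSum_pos (n + 1) hz).ne'
    rw [poisTail, Nat.factorial_succ, pow_succ]
    push_cast
    field_simp

lemma hasDerivAt_poisTail_comp {k : ℕ} {z : ℝ → ℝ} {E D t : ℝ} (hz : 0 < z t)
    (hderiv : HasDerivAt z (-(E * z t) / D) t) :
    HasDerivAt (fun t => poisTail k (z t))
      (-(E * k * (z t ^ k / ((k ! : ℝ) * truncExpSum k (z t))) / D * poisTail k (z t))) t := by
  refine (hasDerivAt_poisTail hz).comp t hderiv |>.congr_deriv ?_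
  field_simp

lemma hasDerivAt_mul_div_of_logDeriv {f g h : ℝ → ℝ} {a b t : ℝ}
    (hf : HasDerivAt f (-(a * f t)) t) (hg : HasDerivAt g (-(b * g t)) t)
    (hh : HasDerivAt h (-((a + b) * h t)) t) (ht : h t ≠ 0) :
    HasDerivAt (fun t => f t * g t / h t) 0 t := by
  refine (hf.fun_mul hg).div hh ht |>.congr_deriv ?_
  field_simp
  ring

theorem stmt19_general (k1 k2 : ℕ) (zi zo v μ L Ei Eo : ℝ → ℝ)
    (hv : ∀ t : ℝ, 0 < v t)
    (hzip : ∀ t : ℝ, 0 < zi t) (hzop : ∀ t : ℝ, 0 < zo t)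
    (hzi : ∀ t : ℝ, HasDerivAt zi (-(Eo t * zi t) / (L t * μ t)) t)
    (hzo : ∀ t : ℝ, HasDerivAt zo (-(Ei t * zo t) / (L t * μ t)) t)
    (hv' : ∀ t : ℝ, HasDerivAt v
      (-(Eo t * k1 * (zi t ^ k1 / ((Nat.factorial k1 : ℝ) * truncExpSum k1 (zi t))) * v t)
          / (L t * μ t)
        - (Ei t * k2 * (zo t ^ k2 / ((Nat.factorial k2 : ℝ) * truncExpSum k2 (zo t))) * v t)
          / (L t * μ t)) t) :
    ∀ s t : ℝ, poisTail k1 (zi s) * poisTail k2 (zo s) / v s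
      = poisTail k1 (zi t) * poisTail k2 (zo t) / v t := by
  have hconst : ∀ t, HasDerivAt (fun t => poisTail k1 (zi t) * poisTail k2 (zo t) / v t) 0 t :=
    fun t => hasDerivAt_mul_div_of_logDeriv (hasDerivAt_poisTail_comp (hzip t) (hzi t))
      (hasDerivAt_poisTail_comp (hzop t) (hzo t))
      ((hv' t).congr_deriv (by ring)) (hv t).ne'
  exact is_const_of_deriv_eq_zero (fun t => (hconst t).differentiableAt) fun t => (hconst t).deriv

/-- along the ODE system, `p_{k_1}(z_i) p_{k_2}(z_o)/v` is conserved. -/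
theorem stmt19 (k1 k2 : ℕ) (zi zo v μ L Ei Eo : ℝ → ℝ)
    (hL : ∀ t : ℝ, 0 < L t) (hμ : ∀ t : ℝ, 0 < μ t) (hv : ∀ t : ℝ, 0 < v t)
    (hzip : ∀ t : ℝ, 0 < zi t) (hzop : ∀ t : ℝ, 0 < zo t)
    (hzi : ∀ t : ℝ, HasDerivAt zi (-(Eo t * zi t) / (L t * μ t)) t)
    (hzo : ∀ t : ℝ, HasDerivAt zo (-(Ei t * zo t) / (L t * μ t)) t)
    (hv' : ∀ t : ℝ, HasDerivAt v
      (-(Eo t * k1 * (zi t ^ k1 / ((Nat.factorial k1 : ℝ) * truncExpSum k1 (zi t))) * v t)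
          / (L t * μ t)
        - (Ei t * k2 * (zo t ^ k2 / ((Nat.factorial k2 : ℝ) * truncExpSum k2 (zo t))) * v t)
          / (L t * μ t)) t) :
    ∀ s t : ℝ, poisTail k1 (zi s) * poisTail k2 (zo s) / v s
      = poisTail k1 (zi t) * poisTail k2 (zo t) / v t :=
  stmt19_general k1 k2 zi zo v μ L Ei Eo hv hzip hzop hzi hzo hv'
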